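/- arXiv:2004.01345 — 2 statements merged into one kernel-verified Lean document; each statement's English description precedes it below -/
import Mathlib

section
/- Let (x_s)_{s≥1} be nonnegative reals and for j ≥ 0 set S_j = ∑_{s=jN}^{(j+1)N−1} x_s² (with the j = 0 block starting at s = 1). If V_N := 2·∑_{s=1}^N x_s² is slowly varying in N (Karamata) and diverges, then ∑_{j=1}^∞ (1/j)·S_j = o(V_N) as N → ∞. -/
open Filter Finset Topology

/-!
Let `T_k(N) = ∑_{N ≤ s < (k+1)N} x_s²`. Summation by parts bounds `∑_j S_j / j` by
`2 ∑_k T_k(N) / (k(k+1))`. Slow variation gives `V((k+1)N) / V_N → 1` and `V(N/2) / V_N → 1`,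
so `T_k(N) / V_N → 0` for each `k`. It also gives `V(2N) ≤ √2 V_N` eventually; iterating along
powers of two yields the Potter-type bound `T_k(N) ≤ √(2(k+1)) V_N / 2`, so the normalised terms
are dominated by `k^(-3/2)` and dominated convergence concludes.
-/

-- The terms `j = 0` and `k = 0` vanish because `x / 0 = 0`.
theorem sum_range_succ_div_natCast_eq (a : ℕ → ℝ) (n : ℕ) :
    ∑ j ∈ range (n + 1), a j / j =
      ∑ k ∈ range (n + 1), (∑ j ∈ Icc 1 k, a j) / (k * (k + 1)) +
        (∑ j ∈ Icc 1 n, a j) / (n + 1) := by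
  induction n with
  | zero => simp
  | succ n ih =>
    rw [sum_range_succ, ih, sum_range_succ _ (n + 1), sum_Icc_succ_top (by omega)]
    push_cast
    field_simp
    ring

theorem sum_Ico_one_div_mul_succ {m n : ℕ} (hm : 0 < m) (hmn : m ≤ n) :
    ∑ k ∈ Ico m n, 1 / ((k : ℝ) * (k + 1)) = 1 / m - 1 / n := by
  induction n, hmn using Nat.le_induction with
  | base => simp
  | succ n hmn ih =>
    have hn : (0 : ℝ) < n := by exact_mod_cast hm.trans_le hmn
    rw [sum_Ico_succ_top hmn, ih]
    push_cast
    field_simp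
    ring

theorem div_succ_le_two_mul_sum_Ico {A : ℕ → ℝ} (hA : Monotone A) (n : ℕ) :
    A n / (n + 1) ≤ 2 * ∑ k ∈ Ico (n + 1) (2 * n + 2), A k / (k * (k + 1)) := by
  calc A n / (n + 1) = 2 * ∑ k ∈ Ico (n + 1) (2 * n + 2), A n * (1 / (k * (k + 1))) := by
        rw [← mul_sum, sum_Ico_one_div_mul_succ (by omega) (by omega)]
        push_cast
        field_simp
        ring
    _ ≤ 2 * ∑ k ∈ Ico (n + 1) (2 * n + 2), A k * (1 / (k * (k + 1))) := by
        gcongr with k hk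
        exact hA (by have := (mem_Ico.mp hk).1; omega)
    _ = 2 * ∑ k ∈ Ico (n + 1) (2 * n + 2), A k / (k * (k + 1)) := by
        simp only [mul_one_div]

theorem tsum_div_natCast_le_two_mul_tsum {a : ℕ → ℝ} (ha : ∀ j, 0 ≤ a j)
    (hs : Summable fun k : ℕ => (∑ j ∈ Icc 1 k, a j) / (k * (k + 1))) :
    ∑' j : ℕ, a j / j ≤ 2 * ∑' k : ℕ, (∑ j ∈ Icc 1 k, a j) / (k * (k + 1)) := by
  set A : ℕ → ℝ := fun k => ∑ j ∈ Icc 1 k, a j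
  have hA : Monotone A := fun m n hmn =>
    sum_le_sum_of_subset_of_nonneg (Icc_subset_Icc le_rfl hmn) fun j _ _ => ha j
  have hterm (k : ℕ) : 0 ≤ A k / (k * (k + 1)) :=
    div_nonneg (sum_nonneg fun j _ => ha j) (by positivity)
  refine Real.tsum_le_of_sum_range_le (fun j => div_nonneg (ha j) j.cast_nonneg) fun n => ?_
  rcases n with _ | n
  · simpa using mul_nonneg zero_le_two (tsum_nonneg hterm)
  have hhead : 0 ≤ ∑ k ∈ range (n + 1), A k / (k * (k + 1)) := sum_nonneg fun k _ => hterm k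
  calc ∑ j ∈ range (n + 1), a j / j
      = ∑ k ∈ range (n + 1), A k / (k * (k + 1)) + A n / (n + 1) :=
        sum_range_succ_div_natCast_eq a n
    _ ≤ 2 * (∑ k ∈ range (n + 1), A k / (k * (k + 1)) +
          ∑ k ∈ Ico (n + 1) (2 * n + 2), A k / (k * (k + 1))) := by
        linarith [div_succ_le_two_mul_sum_Ico hA n]
    _ = 2 * ∑ k ∈ range (2 * n + 2), A k / (k * (k + 1)) := by
        rw [range_eq_Ico, range_eq_Ico, sum_Ico_consecutive _ (by omega) (by omega)]
    _ ≤ 2 * ∑' k, A k / (k * (k + 1)) := by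
        gcongr
        exact hs.sum_le_tsum _ fun k _ => hterm k

theorem sum_Icc_sum_Ico_mul (u : ℕ → ℝ) (N k : ℕ) :
    ∑ j ∈ Icc 1 k, ∑ s ∈ Ico (j * N) ((j + 1) * N), u s = ∑ s ∈ Ico N ((k + 1) * N), u s := by
  induction k with
  | zero => simp
  | succ k ih =>
    rw [sum_Icc_succ_top (by omega), ih, sum_Ico_consecutive _ (by nlinarith) (by nlinarith)]

theorem tsum_sum_Ico_div_le {u : ℕ → ℝ} (hu : ∀ s, 0 ≤ u s) {N : ℕ}
    (hs : Summable fun k : ℕ => (∑ s ∈ Ico N ((k + 1) * N), u s) / (k * (k + 1))) :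
    ∑' j : ℕ, (∑ s ∈ Ico (j * N) ((j + 1) * N), u s) / j ≤
      2 * ∑' k : ℕ, (∑ s ∈ Ico N ((k + 1) * N), u s) / (k * (k + 1)) := by
  simp only [← sum_Icc_sum_Ico_mul u N] at hs ⊢
  exact tsum_div_natCast_le_two_mul_tsum (fun j => sum_nonneg fun s _ => hu s) hs

theorem sub_eq_two_mul_sum_Ioc {u V : ℕ → ℝ} (hV : ∀ N, V N = 2 * ∑ s ∈ Icc 1 N, u s)
    {a b : ℕ} (hab : a ≤ b) : V b - V a = 2 * ∑ s ∈ Ioc a b, u s := by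
  have hIcc (n : ℕ) : Icc 1 n = Ioc 0 n := Icc_add_one_left_eq_Ioc 0 n
  rw [hV, hV, hIcc, hIcc, ← sum_Ioc_consecutive u (Nat.zero_le a) hab]
  ring

theorem sum_Ico_le_half_sub {u V : ℕ → ℝ} (hu : ∀ s, 0 ≤ u s)
    (hV : ∀ N, V N = 2 * ∑ s ∈ Icc 1 N, u s) {a N b : ℕ} (haN : a < N) (hNb : N ≤ b) :
    ∑ s ∈ Ico N b, u s ≤ (V b - V a) / 2 := by
  rw [sub_eq_two_mul_sum_Ioc hV (haN.le.trans hNb), mul_div_cancel_left₀ _ two_ne_zero]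
  refine sum_le_sum_of_subset_of_nonneg (fun s hs => ?_) fun s _ _ => hu s
  rw [mem_Ico] at hs
  rw [mem_Ioc]
  omega

theorem monotone_of_eq_two_mul_sum_Icc {u V : ℕ → ℝ} (hu : ∀ s, 0 ≤ u s)
    (hV : ∀ N, V N = 2 * ∑ s ∈ Icc 1 N, u s) : Monotone V := fun a b hab => by
  have := sub_eq_two_mul_sum_Ioc hV hab
  have : 0 ≤ ∑ s ∈ Ioc a b, u s := sum_nonneg fun s _ => hu s
  linarith

theorem nonneg_of_eq_two_mul_sum_Icc {u V : ℕ → ℝ} (hu : ∀ s, 0 ≤ u s)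
    (hV : ∀ N, V N = 2 * ∑ s ∈ Icc 1 N, u s) (N : ℕ) : 0 ≤ V N := by
  rw [hV]
  exact mul_nonneg zero_le_two (sum_nonneg fun s _ => hu s)

theorem pow_mul_le_of_doubling {V : ℕ → ℝ} {c : ℝ} (hc : 0 ≤ c) {N : ℕ}
    (hdouble : ∀ M, N ≤ M → V (2 * M) ≤ c * V M) (m : ℕ) : V (2 ^ m * N) ≤ c ^ m * V N := by
  induction m with
  | zero => simp
  | succ m ih =>
    calc V (2 ^ (m + 1) * N) = V (2 * (2 ^ m * N)) := by rw [pow_succ, mul_comm _ 2, mul_assoc]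
      _ ≤ c * V (2 ^ m * N) := hdouble _ (Nat.le_mul_of_pos_left N (by positivity))
      _ ≤ c ^ (m + 1) * V N := by rw [pow_succ', mul_assoc]; exact mul_le_mul_of_nonneg_left ih hc

theorem le_sqrt_two_mul_of_doubling {V : ℕ → ℝ} (hV : Monotone V) {N : ℕ}
    (hdouble : ∀ M, N ≤ M → V (2 * M) ≤ √2 * V M) (hVN : 0 ≤ V N) {k : ℕ} (hk : k ≠ 0) :
    V (k * N) ≤ √(2 * k) * V N := by
  set m := Nat.log 2 k
  have hk_lt : k < 2 ^ (m + 1) := Nat.lt_pow_succ_log_self one_lt_two k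
  have hpow_le : ((2 ^ m : ℕ) : ℝ) ≤ k := by exact_mod_cast Nat.pow_log_le_self 2 hk
  have hsqrt : √2 ^ (m + 1) ≤ √(2 * k) := by
    rw [Real.le_sqrt (by positivity) (by positivity), ← pow_mul, mul_comm, pow_mul,
      Real.sq_sqrt zero_le_two, pow_succ']
    push_cast at hpow_le
    linarith
  calc V (k * N) ≤ V (2 ^ (m + 1) * N) := hV (Nat.mul_le_mul_right N hk_lt.le)
    _ ≤ √2 ^ (m + 1) * V N := pow_mul_le_of_doubling (Real.sqrt_nonneg 2) hdouble (m + 1)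
    _ ≤ √(2 * k) * V N := mul_le_mul_of_nonneg_right hsqrt hVN

def IsSlowlyVarying (V : ℕ → ℝ) : Prop :=
  ∀ l : ℝ, 0 < l → Tendsto (fun N : ℕ => V ⌊l * N⌋₊ / V N) atTop (𝓝 1)

theorem IsSlowlyVarying.tendsto_natCast_mul {V : ℕ → ℝ} (hV : IsSlowlyVarying V) {c : ℕ}
    (hc : c ≠ 0) : Tendsto (fun N : ℕ => V (c * N) / V N) atTop (𝓝 1) := by
  simpa only [← Nat.cast_mul, Nat.floor_natCast] using hV c (by positivity)

theorem IsSlowlyVarying.eventually_doubling {V : ℕ → ℝ} (hV : IsSlowlyVarying V)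
    (hV₀ : ∀ N, 0 ≤ V N) : ∀ᶠ N in atTop, 0 < V N ∧ V (2 * N) ≤ √2 * V N := by
  filter_upwards [(hV.tendsto_natCast_mul two_ne_zero).eventually
    (Ioo_mem_nhds one_pos Real.one_lt_sqrt_two)] with N ⟨hratio_pos, hratio_le⟩
  -- `V (2 * N) / 0 = 0`, so a positive ratio forces `V N ≠ 0`
  have hVN : 0 < V N := (hV₀ N).lt_of_ne fun h => by simp [← h] at hratio_pos
  exact ⟨hVN, (div_le_iff₀ hVN).mp hratio_le.le⟩

theorem IsSlowlyVarying.tendsto_sum_Ico_div {u V : ℕ → ℝ} (hu : ∀ s, 0 ≤ u s)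
    (hV : ∀ N, V N = 2 * ∑ s ∈ Icc 1 N, u s) (hslow : IsSlowlyVarying V) (k : ℕ) :
    Tendsto (fun N : ℕ => (∑ s ∈ Ico N ((k + 1) * N), u s) / V N) atTop (𝓝 0) := by
  have hV₀ := nonneg_of_eq_two_mul_sum_Icc hu hV
  have hupper : Tendsto (fun N : ℕ => (V ((k + 1) * N) / V N - V ⌊(2⁻¹ : ℝ) * N⌋₊ / V N) / 2)
      atTop (𝓝 0) := by
    simpa using ((hslow.tendsto_natCast_mul k.succ_ne_zero).sub
      (hslow 2⁻¹ (by norm_num))).div_const 2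
  refine tendsto_of_tendsto_of_tendsto_of_le_of_le' tendsto_const_nhds hupper
    (Eventually.of_forall fun N => div_nonneg (sum_nonneg fun s _ => hu s) (hV₀ N)) ?_
  filter_upwards [eventually_ge_atTop 1] with N hN
  have hfloor : ⌊(2⁻¹ : ℝ) * N⌋₊ < N := by
    have : (1 : ℝ) ≤ N := by exact_mod_cast hN
    rw [Nat.floor_lt (by positivity)]
    linarith
  calc _ ≤ (V ((k + 1) * N) - V ⌊(2⁻¹ : ℝ) * N⌋₊) / 2 / V N :=
        div_le_div_of_nonneg_right
          (sum_Ico_le_half_sub hu hV hfloor (Nat.le_mul_of_pos_left N k.succ_pos)) (hV₀ N)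
    _ = _ := by ring

theorem sqrt_two_mul_succ_div_le_rpow_inv (k : ℕ) :
    √(2 * (k + 1)) / 2 / (k * (k + 1)) ≤ ((k : ℝ) ^ (3 / 2 : ℝ))⁻¹ := by
  rcases Nat.eq_zero_or_pos k with rfl | hk
  · simp
  have hk : (0 : ℝ) < k := by exact_mod_cast hk
  have hrpow : (k : ℝ) ^ (3 / 2 : ℝ) = k * √k := by
    rw [show (3 / 2 : ℝ) = 1 + 1 / 2 by norm_num, Real.rpow_add hk, Real.rpow_one,
      Real.sqrt_eq_rpow]
  have hsq : √(2 * (k + 1)) * √(2 * (k + 1)) = 2 * (k + 1) := Real.mul_self_sqrt (by positivity)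
  have hle : √k ≤ √(2 * (k + 1)) := Real.sqrt_le_sqrt (by linarith)
  rw [hrpow, div_div, inv_eq_one_div, div_le_div_iff₀ (by positivity) (by positivity)]
  nlinarith [mul_le_mul_of_nonneg_left hle (Real.sqrt_nonneg (2 * (k + 1))),
    Real.sqrt_nonneg (k : ℝ)]

theorem sum_Ico_div_le_rpow_inv {u V : ℕ → ℝ} (hu : ∀ s, 0 ≤ u s)
    (hV : ∀ N, V N = 2 * ∑ s ∈ Icc 1 N, u s) {N : ℕ} (hN : 1 ≤ N) (hVN : 0 < V N)
    (hdouble : ∀ M, N ≤ M → V (2 * M) ≤ √2 * V M) (k : ℕ) :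
    (∑ s ∈ Ico N ((k + 1) * N), u s) / (k * (k + 1)) / V N ≤ ((k : ℝ) ^ (3 / 2 : ℝ))⁻¹ := by
  have hV0 : V 0 = 0 := by simp [hV 0]
  have hT : ∑ s ∈ Ico N ((k + 1) * N), u s ≤ √(2 * (k + 1)) * V N / 2 := by
    calc _ ≤ (V ((k + 1) * N) - V 0) / 2 :=
          sum_Ico_le_half_sub hu hV hN (Nat.le_mul_of_pos_left N k.succ_pos)
      _ ≤ √(2 * (k + 1)) * V N / 2 := by
          rw [hV0, sub_zero]
          gcongr
          exact_mod_cast le_sqrt_two_mul_of_doubling (monotone_of_eq_two_mul_sum_Icc hu hV)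
            hdouble hVN.le k.succ_ne_zero
  calc _ ≤ √(2 * (k + 1)) * V N / 2 / (k * (k + 1)) / V N := by gcongr
    _ = √(2 * (k + 1)) / 2 / (k * (k + 1)) := by field_simp
    _ ≤ _ := sqrt_two_mul_succ_div_le_rpow_inv k

theorem IsSlowlyVarying.eventually_sum_Ico_div_le {u V : ℕ → ℝ} (hu : ∀ s, 0 ≤ u s)
    (hV : ∀ N, V N = 2 * ∑ s ∈ Icc 1 N, u s) (hslow : IsSlowlyVarying V) :
    ∀ᶠ N in atTop, 0 < V N ∧ ∀ k : ℕ,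
      (∑ s ∈ Ico N ((k + 1) * N), u s) / (k * (k + 1)) / V N ≤ ((k : ℝ) ^ (3 / 2 : ℝ))⁻¹ := by
  obtain ⟨N₀, hN₀⟩ :=
    eventually_atTop.mp (hslow.eventually_doubling (nonneg_of_eq_two_mul_sum_Icc hu hV))
  filter_upwards [eventually_ge_atTop (max N₀ 1)] with N hN
  have hN₀N : N₀ ≤ N := le_of_max_le_left hN
  exact ⟨(hN₀ N hN₀N).1, sum_Ico_div_le_rpow_inv hu hV (le_of_max_le_right hN) (hN₀ N hN₀N).1
    fun M hM => (hN₀ M (hN₀N.trans hM)).2⟩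

theorem IsSlowlyVarying.tendsto_tsum_sum_Ico_div {u V : ℕ → ℝ} (hu : ∀ s, 0 ≤ u s)
    (hV : ∀ N, V N = 2 * ∑ s ∈ Icc 1 N, u s) (hslow : IsSlowlyVarying V) :
    Tendsto (fun N : ℕ => ∑' k : ℕ, (∑ s ∈ Ico N ((k + 1) * N), u s) / (k * (k + 1)) / V N)
      atTop (𝓝 0) := by
  have hlim (k : ℕ) : Tendsto (fun N : ℕ => (∑ s ∈ Ico N ((k + 1) * N), u s) / (k * (k + 1)) / V N)
      atTop (𝓝 0) := by
    simpa only [div_right_comm _ ((k : ℝ) * (k + 1)), zero_div] using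
      (hslow.tendsto_sum_Ico_div hu hV k).div_const ((k : ℝ) * (k + 1))
  have hdom : ∀ᶠ N in atTop, ∀ k : ℕ,
      ‖(∑ s ∈ Ico N ((k + 1) * N), u s) / (k * (k + 1)) / V N‖ ≤ ((k : ℝ) ^ (3 / 2 : ℝ))⁻¹ := by
    filter_upwards [hslow.eventually_sum_Ico_div_le hu hV] with N ⟨hVN, hle⟩ k
    rw [Real.norm_of_nonneg
      (div_nonneg (div_nonneg (sum_nonneg fun s _ => hu s) (by positivity)) hVN.le)]
    exact hle k
  simpa using tendsto_tsum_of_dominated_convergence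
    (Real.summable_nat_rpow_inv.mpr (by norm_num : (1 : ℝ) < 3 / 2)) hlim hdom

theorem block_weighted_sum_isLittleO_general
    (x : ℕ → ℝ)
    (V : ℕ → ℝ) (hV : ∀ N, V N = 2 * ∑ s ∈ Icc 1 N, x s ^ 2)
    (hslow : ∀ l : ℝ, 0 < l →
      Tendsto (fun N : ℕ => V ⌊l * N⌋₊ / V N) atTop (nhds 1)) :
    (fun N : ℕ => ∑' j : ℕ,
        (1 / (j : ℝ)) * ∑ s ∈ Ico (j * N) ((j + 1) * N), x s ^ 2) =o[atTop] V := by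
  have hu (s : ℕ) : 0 ≤ x s ^ 2 := sq_nonneg _
  have hbound := IsSlowlyVarying.eventually_sum_Ico_div_le hu hV hslow
  rw [Asymptotics.isLittleO_iff_tendsto' (hbound.mono fun N h h0 => absurd h0 h.1.ne')]
  refine squeeze_zero' ?_ ?_
    (by simpa using (IsSlowlyVarying.tendsto_tsum_sum_Ico_div hu hV hslow).const_mul 2)
  · filter_upwards [hbound] with N ⟨hVN, _⟩
    exact div_nonneg (tsum_nonneg fun j => mul_nonneg (by positivity) (sum_nonneg fun s _ => hu s))
      hVN.le
  filter_upwards [hbound] with N ⟨hVN, hle⟩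
  have hs : Summable fun k : ℕ => (∑ s ∈ Ico N ((k + 1) * N), x s ^ 2) / (k * (k + 1)) := by
    rw [← summable_div_const_iff hVN.ne']
    exact (Real.summable_nat_rpow_inv.mpr (by norm_num : (1 : ℝ) < 3 / 2)).of_nonneg_of_le
      (fun k => div_nonneg (div_nonneg (sum_nonneg fun s _ => hu s) (by positivity)) hVN.le) hle
  simp only [one_div_mul_eq_div]
  rw [tsum_div_const, ← mul_div_assoc]
  exact div_le_div_of_nonneg_right (tsum_sum_Ico_div_le hu hs) hVN.le

/-- If `V_N = 2∑_{s=1}^N x_s²` is slowly varying (Karamata) and diverges, then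
`∑_{j≥1} (1/j)·S_j = o(V_N)`, where `S_j = ∑_{s=jN}^{(j+1)N−1} x_s²`. -/
theorem block_weighted_sum_isLittleO
    (x : ℕ → ℝ) (hx : ∀ s, 0 ≤ x s)
    (V : ℕ → ℝ) (hV : ∀ N, V N = 2 * ∑ s ∈ Icc 1 N, x s ^ 2)
    (hslow : ∀ l : ℝ, 0 < l →
      Tendsto (fun N : ℕ => V ⌊l * N⌋₊ / V N) atTop (nhds 1))
    (hdiv : Tendsto V atTop atTop) :
    (fun N : ℕ => ∑' j : ℕ,
        (1 / (j : ℝ)) * ∑ s ∈ Ico (j * N) ((j + 1) * N), x s ^ 2) =o[atTop] V :=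
  block_weighted_sum_isLittleO_general x V hV hslow
end

section
/- Let (c_k)_{k≥1} be nonnegative with V_N = 2∑_{k=1}^N k²c_k² slowly varying (Karamata) and divergent. Then N²·∑_{s ≥ N} c_s² = o(V_N) as N → ∞. -/
/-!
Put `T_N = ∑_{s ≥ N} c_s²`. On a dyadic block, `M²(T_M - T_{2M}) ≤ ∑_{M ≤ s < 2M} s² c_s²
≤ (V_{2M} - V_{M-1}) / 2`, and slow variation makes this at most `ε V_M / 2` for large `M`,
while also `V_{2M} ≤ 2 V_M`. Summing over the blocks starting at `M = 2^k N` gives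
`N² T_N ≤ ∑_k 4^{-k} · ε 2^k V_N / 2 = ε V_N`.
-/

open Filter Finset

def SlowlyVarying (V : ℕ → ℝ) : Prop :=
  ∀ l : ℝ, 0 < l → Tendsto (fun N : ℕ => V ⌊l * N⌋₊ / V N) atTop (nhds 1)

namespace SlowlyVarying

variable {V : ℕ → ℝ}

/-- At `l = 1` the ratio is `V N / V N`, which is `0`, not `1`, wherever `V N = 0`. -/
theorem eventually_ne_zero (hV : SlowlyVarying V) : ∀ᶠ N in atTop, V N ≠ 0 := by
  have h := hV 1 one_pos
  simp only [one_mul, Nat.floor_natCast] at h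
  filter_upwards [h.eventually_ne one_ne_zero] with N hN hzero
  simp [hzero] at hN

theorem eventually_pos (hV : SlowlyVarying V) (hnonneg : ∀ N, 0 ≤ V N) :
    ∀ᶠ N in atTop, 0 < V N := by
  filter_upwards [hV.eventually_ne_zero] with N hN using (hnonneg N).lt_of_ne' hN

theorem tendsto_two_mul (hV : SlowlyVarying V) :
    Tendsto (fun N => V (2 * N) / V N) atTop (nhds 1) := by
  refine (hV 2 two_pos).congr fun N => ?_
  rw [← Nat.cast_ofNat, ← Nat.cast_mul, Nat.floor_natCast]

theorem tendsto_div_two (hV : SlowlyVarying V) :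
    Tendsto (fun N => V (N / 2) / V N) atTop (nhds 1) := by
  refine (hV (1 / 2) one_half_pos).congr fun N => ?_
  rw [one_div_mul_eq_div, ← Nat.cast_ofNat, Nat.floor_div_natCast, Nat.floor_natCast]

theorem tendsto_sub_one (hV : SlowlyVarying V) (hmono : Monotone V) (hnonneg : ∀ N, 0 ≤ V N) :
    Tendsto (fun N => V (N - 1) / V N) atTop (nhds 1) := by
  refine tendsto_of_tendsto_of_tendsto_of_le_of_le' hV.tendsto_div_two tendsto_const_nhds ?_ ?_
  · filter_upwards [eventually_ge_atTop 2, hV.eventually_pos hnonneg] with N hN hpos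
    gcongr
    exact hmono (by omega)
  · filter_upwards [hV.eventually_pos hnonneg] with N hpos
    exact div_le_one_of_le₀ (hmono (Nat.sub_le N 1)) hpos.le

theorem isLittleO_sub (hV : SlowlyVarying V) (hmono : Monotone V) (hnonneg : ∀ N, 0 ≤ V N) :
    (fun N => V (2 * N) - V (N - 1)) =o[atTop] V := by
  rw [Asymptotics.isLittleO_iff_tendsto' ?_]
  · simpa [sub_div] using hV.tendsto_two_mul.sub (hV.tendsto_sub_one hmono hnonneg)
  · filter_upwards [hV.eventually_ne_zero] with N hN hzero using absurd hzero hN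

theorem eventually_le_two_mul (hV : SlowlyVarying V) (hnonneg : ∀ N, 0 ≤ V N) :
    ∀ᶠ N in atTop, V (2 * N) ≤ 2 * V N := by
  filter_upwards [hV.tendsto_two_mul.eventually_le_const one_lt_two,
    hV.eventually_pos hnonneg] with N hN hpos
  exact (div_le_iff₀ hpos).1 hN

end SlowlyVarying

theorem pow_mul_le_of_le_two_mul {V : ℕ → ℝ} {N₀ N : ℕ} (h : ∀ M ≥ N₀, V (2 * M) ≤ 2 * V M)
    (hN : N₀ ≤ N) (k : ℕ) : V (2 ^ k * N) ≤ 2 ^ k * V N := by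
  induction k with
  | zero => simp
  | succ k ih =>
    calc V (2 ^ (k + 1) * N) = V (2 * (2 ^ k * N)) := by ring_nf
      _ ≤ 2 * V (2 ^ k * N) := h _ (hN.trans (Nat.le_mul_of_pos_left N (by positivity)))
      _ ≤ 2 ^ (k + 1) * V N := by rw [pow_succ']; linarith

theorem tsum_ite_le_eq_tsum_nat_add {α : Type*} [AddCommMonoid α] [TopologicalSpace α]
    (f : ℕ → α) (N : ℕ) : (∑' s, if N ≤ s then f s else 0) = ∑' i, f (i + N) := by
  rw [← (add_left_injective N).tsum_eq (f := fun s => if N ≤ s then f s else 0)]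
  · simp
  · intro s hs
    have : N ≤ s := by by_contra h; simp [h] at hs
    exact ⟨s - N, Nat.sub_add_cancel this⟩

theorem tsum_nat_add_sub_tsum_nat_add_le {f : ℕ → ℝ} (hf : ∀ s, 0 ≤ f s) {M M' : ℕ}
    (h : M ≤ M') : ∑' i, f (i + M) - ∑' i, f (i + M') ≤ ∑ s ∈ Ico M M', f s := by
  by_cases hsum : Summable f
  · have := ((summable_nat_add_iff M).2 hsum).sum_add_tsum_nat_add (M' - M)
    rw [sum_Ico_eq_sum_range, ← this]
    simp_rw [add_assoc, Nat.sub_add_cancel h, add_comm M]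
    simp
  · simp only [tsum_eq_zero_of_not_summable (mt (summable_nat_add_iff _).1 hsum), sub_zero]
    exact sum_nonneg fun s _ => hf s

theorem le_div_one_sub_of_sub_succ_le {u : ℕ → ℝ} {a r : ℝ} (hu : Tendsto u atTop (nhds 0))
    (hr₀ : 0 ≤ r) (hr₁ : r < 1) (h : ∀ k, u k - u (k + 1) ≤ a * r ^ k) : u 0 ≤ a / (1 - r) := by
  have hpartial (n : ℕ) : u 0 - u n ≤ a * (1 - r ^ n) / (1 - r) :=
    calc u 0 - u n = ∑ k ∈ range n, (u k - u (k + 1)) := (sum_range_sub' u n).symm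
      _ ≤ ∑ k ∈ range n, a * r ^ k := sum_le_sum fun k _ => h k
      _ = a * (1 - r ^ n) / (1 - r) := by
        rw [← mul_sum, geom_sum_eq hr₁.ne, mul_div_assoc, ← neg_div_neg_eq, neg_sub, neg_sub]
  have hlim : Tendsto (fun n => a * (1 - r ^ n) / (1 - r)) atTop (nhds (a * (1 - 0) / (1 - r))) :=
    (((tendsto_pow_atTop_nhds_zero_of_lt_one hr₀ hr₁).const_sub 1).const_mul a).div_const _
  have hleft : Tendsto (fun n => u 0 - u n) atTop (nhds (u 0 - 0)) := tendsto_const_nhds.sub hu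
  simpa using le_of_tendsto_of_tendsto' hleft hlim hpartial

theorem sq_mul_tsum_nat_add_le {f : ℕ → ℝ} (hf : ∀ s, 0 ≤ f s) {N : ℕ} (hN : 0 < N) {a : ℝ}
    (hblock : ∀ k, ((2 ^ k * N : ℕ) : ℝ) ^ 2 * ∑ s ∈ Ico (2 ^ k * N) (2 ^ (k + 1) * N), f s
      ≤ a * 2 ^ k) :
    (N : ℝ) ^ 2 * ∑' i, f (i + N) ≤ 2 * a := by
  have hdyadic : Tendsto (fun k : ℕ => 2 ^ k * N) atTop atTop :=
    tendsto_atTop_mono (fun k => Nat.le_mul_of_pos_right _ hN)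
      (tendsto_pow_atTop_atTop_of_one_lt _root_.one_lt_two)
  have hu : Tendsto (fun k : ℕ => (N : ℝ) ^ 2 * ∑' i, f (i + 2 ^ k * N)) atTop (nhds 0) := by
    simpa using ((tendsto_sum_nat_add f).comp hdyadic).const_mul ((N : ℝ) ^ 2)
  have hstep (k : ℕ) :
      (N : ℝ) ^ 2 * ∑' i, f (i + 2 ^ k * N) - (N : ℝ) ^ 2 * ∑' i, f (i + 2 ^ (k + 1) * N)
        ≤ a * (1 / 2) ^ k := by
    have hdiff := tsum_nat_add_sub_tsum_nat_add_le hf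
      (Nat.mul_le_mul_right N (Nat.pow_le_pow_right two_pos k.le_succ))
    have hscale : ((2 ^ k * N : ℕ) : ℝ) ^ 2 = 4 ^ k * (N : ℝ) ^ 2 := by
      push_cast
      rw [mul_pow, ← pow_mul, mul_comm k 2, pow_mul]
      norm_num
    have hb := hblock k
    rw [hscale] at hb
    have h4 : (0 : ℝ) < 4 ^ k := by positivity
    calc _ ≤ (N : ℝ) ^ 2 * ∑ s ∈ Ico (2 ^ k * N) (2 ^ (k + 1) * N), f s := by
          rw [← mul_sub]; gcongr
      _ ≤ a * 2 ^ k / 4 ^ k := by rw [le_div_iff₀ h4]; linarith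
      _ = a * (1 / 2) ^ k := by rw [mul_div_assoc, ← div_pow]; norm_num
  have := le_div_one_sub_of_sub_succ_le hu (by norm_num) (by norm_num) hstep
  norm_num at this
  linarith

theorem sq_mul_sum_Ico_le {c V : ℕ → ℝ} (hV : ∀ N, V N = 2 * ∑ k ∈ Icc 1 N, (k : ℝ) ^ 2 * c k ^ 2)
    (M : ℕ) : (M : ℝ) ^ 2 * ∑ s ∈ Ico M (2 * M), c s ^ 2 ≤ (V (2 * M) - V (M - 1)) / 2 := by
  have hIoc (N : ℕ) : V N = 2 * ∑ k ∈ Ioc 0 N, (k : ℝ) ^ 2 * c k ^ 2 := by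
    rw [hV, ← Icc_add_one_left_eq_Ioc, zero_add]
  calc (M : ℝ) ^ 2 * ∑ s ∈ Ico M (2 * M), c s ^ 2
      ≤ ∑ s ∈ Ico M (2 * M), (s : ℝ) ^ 2 * c s ^ 2 := by
        rw [mul_sum]
        gcongr with s hs
        exact (mem_Ico.1 hs).1
    _ ≤ ∑ s ∈ Ioc (M - 1) (2 * M), (s : ℝ) ^ 2 * c s ^ 2 := by
        refine sum_le_sum_of_subset_of_nonneg (fun s hs => ?_) fun _ _ _ => by positivity
        simp only [mem_Ico, mem_Ioc] at hs ⊢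
        omega
    _ = (V (2 * M) - V (M - 1)) / 2 := by
        rw [hIoc, hIoc, ← sum_Ioc_consecutive _ (Nat.zero_le (M - 1)) (by omega : M - 1 ≤ 2 * M)]
        ring

theorem sq_mul_sum_dyadic_le {c V : ℕ → ℝ}
    (hV : ∀ N, V N = 2 * ∑ k ∈ Icc 1 N, (k : ℝ) ^ 2 * c k ^ 2) {ε : ℝ} (hε : 0 ≤ ε) {N₀ N : ℕ}
    (hsub : ∀ M ≥ N₀, V (2 * M) - V (M - 1) ≤ ε * V M)
    (hdouble : ∀ M ≥ N₀, V (2 * M) ≤ 2 * V M) (hN : N₀ ≤ N) (k : ℕ) :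
    ((2 ^ k * N : ℕ) : ℝ) ^ 2 * ∑ s ∈ Ico (2 ^ k * N) (2 ^ (k + 1) * N), c s ^ 2
      ≤ ε * V N / 2 * 2 ^ k := by
  have hM : N₀ ≤ 2 ^ k * N := hN.trans (Nat.le_mul_of_pos_left N (by positivity))
  calc _ ≤ (V (2 * (2 ^ k * N)) - V (2 ^ k * N - 1)) / 2 := by
        rw [show 2 ^ (k + 1) * N = 2 * (2 ^ k * N) by ring]
        exact sq_mul_sum_Ico_le hV _
    _ ≤ ε * V (2 ^ k * N) / 2 := by gcongr; exact hsub _ hM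
    _ ≤ ε * (2 ^ k * V N) / 2 := by gcongr; exact pow_mul_le_of_le_two_mul hdouble hN k
    _ = ε * V N / 2 * 2 ^ k := by ring

theorem tail_sum_isLittleO_general
    (c : ℕ → ℝ)
    (V : ℕ → ℝ) (hV : ∀ N, V N = 2 * ∑ k ∈ Icc 1 N, (k : ℝ) ^ 2 * c k ^ 2)
    (hslow : ∀ l : ℝ, 0 < l →
      Tendsto (fun N : ℕ => V ⌊l * N⌋₊ / V N) atTop (nhds 1)) :
    (fun N : ℕ => (N : ℝ) ^ 2 * ∑' s : ℕ, if N ≤ s then c s ^ 2 else 0)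
      =o[atTop] V := by
  have hslow : SlowlyVarying V := hslow
  have hnonneg (N : ℕ) : 0 ≤ V N := by rw [hV]; positivity
  have hmono : Monotone V := fun a b hab => by rw [hV, hV]; gcongr
  simp_rw [tsum_ite_le_eq_tsum_nat_add]
  refine Asymptotics.isLittleO_iff.2 fun ε hε => ?_
  have hsub : ∀ᶠ M in atTop, V (2 * M) - V (M - 1) ≤ ε * V M := by
    filter_upwards [(hslow.isLittleO_sub hmono hnonneg).bound hε] with M hM
    rw [Real.norm_of_nonneg (hnonneg M)] at hM
    exact (le_abs_self _).trans hM
  obtain ⟨N₀, hN₀⟩ := eventually_atTop.1 (hsub.and (hslow.eventually_le_two_mul hnonneg))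
  filter_upwards [eventually_ge_atTop N₀, eventually_gt_atTop 0] with N hN hNpos
  have := sq_mul_tsum_nat_add_le (fun s => sq_nonneg (c s)) hNpos
    (sq_mul_sum_dyadic_le hV hε.le (fun M hM => (hN₀ M hM).1) (fun M hM => (hN₀ M hM).2) hN)
  rw [Real.norm_of_nonneg (by positivity), Real.norm_of_nonneg (hnonneg N)]
  linarith

/-- If `V_N = 2∑_{k=1}^N k²c_k²` is slowly varying (Karamata) and diverges, then
`N²·∑_{s≥N} c_s² = o(V_N)`. -/
theorem tail_sum_isLittleO
    (c : ℕ → ℝ) (hc : ∀ k, 0 ≤ c k)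
    (V : ℕ → ℝ) (hV : ∀ N, V N = 2 * ∑ k ∈ Icc 1 N, (k : ℝ) ^ 2 * c k ^ 2)
    (hslow : ∀ l : ℝ, 0 < l →
      Tendsto (fun N : ℕ => V ⌊l * N⌋₊ / V N) atTop (nhds 1))
    (hdiv : Tendsto V atTop atTop) :
    (fun N : ℕ => (N : ℝ) ^ 2 * ∑' s : ℕ, if N ≤ s then c s ^ 2 else 0)
      =o[atTop] V :=
  tail_sum_isLittleO_general c V hV hslow
end
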